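/- Let N ≥ 1, V: ℝ² → ℝ smooth, f_{j,0}: ℝ² → ℝ smooth for 0 ≤ j ≤ N, and f_{j,2}: ℝ² → ℝ smooth for 0 ≤ j ≤ N−2, with the convention that f_{j,0} and f_{j,2} are zero for indices outside these ranges. Suppose that for all 0 ≤ j ≤ N−1 the ℓ = 1 classical determining equations hold on ℝ²: 2(∂_x f_{j−1,2} + ∂_y f_{j,2}) = (j+1) f_{j+1,0} ∂_x V + (N−j) f_{j,0} ∂_y V. Then the potential V satisfies the linear compatibility partial differential equation Σ_{j=0}^{N−1} (−1)^j ∂_x^{N−1−j} ∂_y^j [ (j+1) f_{j+1,0} ∂_x V + (N−j) f_{j,0} ∂_y V ] = 0 identically on ℝ². -/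

import Mathlib

/-!
Applying `∂ₓ^{N-1-j} ∂_y^j` to the `j`-th determining equation and commuting the mixed partials of
the smooth `f_{k,2}`, the `j`-th summand becomes `2 (-1)^j (w_j + w_{j+1})` with
`w_j = ∂ₓ^{N-j} ∂_y^j f_{j-1,2}`. The alternating sum telescopes to `2 (w_0 - (-1)^N w_N)`, and both
ends vanish because `f_{-1,2} = f_{N-1,2} = 0`. To make the commutation and linearity bookkeeping
automatic, partial derivatives are treated as commuting linear endomorphisms of the space of smooth
functions.
-/

noncomputable section

/-- Partial derivative with respect to `x` of a function on `ℝ²`. -/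
def pdx (f : ℝ × ℝ → ℝ) : ℝ × ℝ → ℝ := fun q => fderiv ℝ f q (1, 0)

/-- Partial derivative with respect to `y` of a function on `ℝ²`. -/
def pdy (f : ℝ × ℝ → ℝ) : ℝ × ℝ → ℝ := fun q => fderiv ℝ f q (0, 1)

open scoped ContDiff

theorem Commute.pow_mul_pow_apply_add {R M : Type*} [Semiring R] [AddCommMonoid M]
    [Module R M] {X Y : Module.End R M} (h : Commute X Y) (a b : ℕ) (u v : M) :
    (X ^ a * Y ^ b) (X u + Y v) = (X ^ (a + 1) * Y ^ b) u + (X ^ a * Y ^ (b + 1)) v := by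
  rw [map_add, ← Module.End.mul_apply, ← Module.End.mul_apply, mul_assoc, mul_assoc,
    ← (h.pow_right b).eq, ← mul_assoc, ← pow_succ, ← pow_succ]

theorem Finset.sum_range_alternating_smul_add {M : Type*} [AddCommGroup M] (w : ℕ → M) (n : ℕ) :
    ∑ j ∈ range n, (-1 : ℤ) ^ j • (w j + w (j + 1)) = w 0 - (-1 : ℤ) ^ n • w n := by
  have htel := Finset.sum_range_sub' (fun j => (-1 : ℤ) ^ j • w j) n
  rw [pow_zero, one_smul] at htel
  rw [← htel]
  refine Finset.sum_congr rfl fun j _ => ?_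
  simp [pow_succ, sub_eq_add_neg]

theorem Commute.sum_range_alternating_pow_mul_pow_apply_eq_zero {R M : Type*} [Semiring R]
    [AddCommGroup M] [Module R M] {X Y : Module.End R M} (h : Commute X Y) {N : ℕ} {g : ℤ → M}
    (hg₀ : g (-1) = 0) (hg₁ : g (N - 1) = 0) :
    ∑ j ∈ Finset.range N, (-1 : ℤ) ^ j • (X ^ (N - 1 - j) * Y ^ j) (X (g (j - 1)) + Y (g j)) =
      0 := by
  let w : ℕ → M := fun j => (X ^ (N - j) * Y ^ j) (g (j - 1))
  have hsummand (j : ℕ) (hj : j < N) :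
      (X ^ (N - 1 - j) * Y ^ j) (X (g (j - 1)) + Y (g j)) = w j + w (j + 1) := by
    rw [h.pow_mul_pow_apply_add, show N - 1 - j + 1 = N - j by omega,
      show N - 1 - j = N - (j + 1) by omega]
    simp only [w, Nat.cast_add, Nat.cast_one, add_sub_cancel_right]
  rw [Finset.sum_congr rfl fun j hj => by rw [hsummand j (Finset.mem_range.1 hj)],
    Finset.sum_range_alternating_smul_add]
  simp [w, hg₀, hg₁]

section DirectionalDeriv

variable {E F : Type*} [NormedAddCommGroup E] [NormedSpace ℝ E]
  [NormedAddCommGroup F] [NormedSpace ℝ F]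

theorem ContDiff.fderiv_apply_fderiv_apply_comm {n : WithTop ℕ∞} {f : E → F}
    (hf : ContDiff ℝ n f) (hn : 2 ≤ n) (v w x : E) :
    fderiv ℝ (fun y => fderiv ℝ f y v) x w = fderiv ℝ (fun y => fderiv ℝ f y w) x v := by
  have hdf : Differentiable ℝ (fderiv ℝ f) :=
    (hf.fderiv_right (m := 1) (by simpa [one_add_one_eq_two] using hn)).differentiable one_ne_zero
  rw [fderiv_clm_apply (hdf x) (differentiableAt_const v),
    fderiv_clm_apply (hdf x) (differentiableAt_const w)]
  simpa using (hf.contDiffAt.isSymmSndFDerivAt (by simpa using hn)).eq w v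

variable (E F) in
def smoothFunctions : Submodule ℝ (E → F) where
  carrier := {f | ContDiff ℝ ∞ f}
  add_mem' {_ _} (hf : ContDiff ℝ ∞ _) (hg : ContDiff ℝ ∞ _) := hf.add hg
  zero_mem' := (contDiff_const : ContDiff ℝ ∞ fun _ : E => (0 : F))
  smul_mem' c _ (hf : ContDiff ℝ ∞ _) := hf.const_smul c

theorem mem_smoothFunctions {f : E → F} : f ∈ smoothFunctions E F ↔ ContDiff ℝ ∞ f := Iff.rfl

def directionalDeriv (v : E) : Module.End ℝ (smoothFunctions E F) where
  toFun f := ⟨fun x => fderiv ℝ (f : E → F) x v, mem_smoothFunctions.2 <|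
    ((mem_smoothFunctions.1 f.2).fderiv_right ENat.coe_top_add_one.le).clm_apply contDiff_const⟩
  map_add' f g := by
    ext x
    have hf := (mem_smoothFunctions.1 f.2).differentiable (by simp)
    have hg := (mem_smoothFunctions.1 g.2).differentiable (by simp)
    simp [fderiv_add (hf x) (hg x)]
  map_smul' c f := by
    ext x
    have hf := (mem_smoothFunctions.1 f.2).differentiable (by simp)
    simp [fderiv_const_smul (hf x)]

theorem commute_directionalDeriv (v w : E) :
    Commute (directionalDeriv (F := F) v) (directionalDeriv w) := by
  ext f x
  exact (mem_smoothFunctions.1 f.2).fderiv_apply_fderiv_apply_comm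
    (WithTop.coe_le_coe.mpr le_top) w v x

theorem coe_directionalDeriv_pow_apply (v : E) (n : ℕ) (f : smoothFunctions E F) :
    ((directionalDeriv v ^ n) f : E → F) = (fun g x => fderiv ℝ g x v)^[n] f := by
  rw [Module.End.pow_apply]
  exact Function.Semiconj.iterate_right (f := Subtype.val) (ga := directionalDeriv v)
    (gb := fun g x => fderiv ℝ g x v) (fun _ => rfl) n f

end DirectionalDeriv

theorem coe_directionalDeriv_pow_mul_pow_apply (a b : ℕ) (f : smoothFunctions (ℝ × ℝ) ℝ) :
    ((directionalDeriv (1, 0) ^ a * directionalDeriv (0, 1) ^ b :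
      Module.End ℝ (smoothFunctions (ℝ × ℝ) ℝ)) f : ℝ × ℝ → ℝ) = pdx^[a] (pdy^[b] f) := by
  rw [Module.End.mul_apply, coe_directionalDeriv_pow_apply, coe_directionalDeriv_pow_apply]
  rfl

theorem sum_range_alternating_pdx_iterate_pdy_iterate_eq_zero {N : ℕ} (c : ℝ)
    {g : ℤ → ℝ × ℝ → ℝ} (hg : ∀ j, ContDiff ℝ ∞ (g j)) (hg₀ : g (-1) = 0) (hg₁ : g (N - 1) = 0)
    (q : ℝ × ℝ) :
    ∑ j ∈ Finset.range N, (-1 : ℝ) ^ j *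
      pdx^[N - 1 - j] (pdy^[j] (fun p => c * (pdx (g (j - 1)) p + pdy (g j) p))) q = 0 := by
  let G (j : ℤ) : smoothFunctions (ℝ × ℝ) ℝ := ⟨g j, hg j⟩
  let Dx : Module.End ℝ (smoothFunctions (ℝ × ℝ) ℝ) := directionalDeriv (1, 0)
  let Dy : Module.End ℝ (smoothFunctions (ℝ × ℝ) ℝ) := directionalDeriv (0, 1)
  let T (j : ℕ) : smoothFunctions (ℝ × ℝ) ℝ :=
    (Dx ^ (N - 1 - j) * Dy ^ j) (Dx (G (j - 1)) + Dy (G j))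
  have hterm (j : ℕ) :
      pdx^[N - 1 - j] (pdy^[j] (fun p => c * (pdx (g (j - 1)) p + pdy (g j) p))) =
        ((c • T j : smoothFunctions (ℝ × ℝ) ℝ) : ℝ × ℝ → ℝ) := by
    rw [← map_smul, coe_directionalDeriv_pow_mul_pow_apply]
    rfl
  calc _ = ((c • ∑ j ∈ Finset.range N, (-1 : ℤ) ^ j • T j :
          smoothFunctions (ℝ × ℝ) ℝ) : ℝ × ℝ → ℝ) q := by
        simp [hterm, Finset.sum_apply, Finset.mul_sum, mul_left_comm]
    _ = 0 := by
        rw [(commute_directionalDeriv _ _).sum_range_alternating_pow_mul_pow_apply_eq_zero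
          (Subtype.ext hg₀) (Subtype.ext hg₁)]
        simp

theorem stmt_5 (N : ℕ) (V : ℝ × ℝ → ℝ)
    (f0 : ℕ → ℝ × ℝ → ℝ)
    (f2 : ℤ → ℝ × ℝ → ℝ)
    (hf2 : ∀ j : ℤ, 0 ≤ j → j ≤ (N : ℤ) - 2 → ContDiff ℝ (⊤ : ℕ∞) (f2 j))
    (hf2zero : ∀ j : ℤ, (j < 0 ∨ (N : ℤ) - 2 < j) → f2 j = 0)
    (hdet : ∀ j : ℕ, j < N → ∀ q : ℝ × ℝ,
      2 * (pdx (f2 ((j : ℤ) - 1)) q + pdy (f2 (j : ℤ)) q) =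
        ((j : ℝ) + 1) * f0 (j + 1) q * pdx V q + ((N : ℝ) - (j : ℝ)) * f0 j q * pdy V q) :
    ∀ q : ℝ × ℝ,
      ∑ j ∈ Finset.range N, (-1 : ℝ) ^ j *
        (pdx^[N - 1 - j] (pdy^[j] (fun p =>
          ((j : ℝ) + 1) * f0 (j + 1) p * pdx V p +
            ((N : ℝ) - (j : ℝ)) * f0 j p * pdy V p))) q = 0 := by
  intro q
  have hsmooth (j : ℤ) : ContDiff ℝ ∞ (f2 j) := by
    by_cases hj : 0 ≤ j ∧ j ≤ (N : ℤ) - 2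
    · exact hf2 j hj.1 hj.2
    · rw [hf2zero j (by omega)]
      exact contDiff_const
  rw [← sum_range_alternating_pdx_iterate_pdy_iterate_eq_zero 2 hsmooth
    (hf2zero (-1) (by omega)) (hf2zero (N - 1) (by omega)) q]
  refine Finset.sum_congr rfl fun j hj => ?_
  simp_rw [hdet j (Finset.mem_range.1 hj)]
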